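/- arXiv:1512.04011 — 4 statements merged into one kernel-verified Lean document; each statement's English description precedes it below -/
import Mathlib

section
/- Let α, Δα ∈ ℝ^n, let γ ∈ (0,1], and let σ' > 0 satisfy the safety condition ‖Aβ‖² ≤ (σ'/γ) Σ_{k=1}^K ‖Aβ_[k]‖² for every β ∈ ℝ^n. Then with v := Aα, the objective satisfies D(α + γ Σ_{k=1}^K Δα_[k]) ≤ (1 − γ) D(α) + γ Σ_{k=1}^K G_k^{σ'}(Δα_[k]; v, α_[k]). -/
open scoped BigOperators

noncomputable section

namespace ProxCoCoA

/-- Euclidean dot product on `Fin m → ℝ`. -/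
def dotp {m : ℕ} (u v : Fin m → ℝ) : ℝ := ∑ j, u j * v j

/-- Squared Euclidean norm on `Fin m → ℝ`. -/
def sqnorm {m : ℕ} (u : Fin m → ℝ) : ℝ := ∑ j, (u j) ^ 2

/-- The `i`-th column `x_i` of the data matrix `A`. -/
def col {d n : ℕ} (A : Matrix (Fin d) (Fin n) ℝ) (i : Fin n) : Fin d → ℝ := fun j => A j i

/-- The restriction `β_[k]` of a vector to block `k` of the partition given by `part`. -/
def restr {n K : ℕ} (part : Fin n → Fin K) (k : Fin K) (β : Fin n → ℝ) : Fin n → ℝ :=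
  fun i => if part i = k then β i else 0

/-- The block `P_k` of the partition, as a finset. -/
def block {n K : ℕ} (part : Fin n → Fin K) (k : Fin K) : Finset (Fin n) :=
  Finset.univ.filter (fun i => part i = k)

/-- A vector is supported on block `P_k`. -/
def supportedOn {n K : ℕ} (part : Fin n → Fin K) (k : Fin K) (β : Fin n → ℝ) : Prop :=
  ∀ i, part i ≠ k → β i = 0

/-- σ_k := sup { ‖Aβ‖²/‖β‖² : β ≠ 0 supported on P_k }. -/
def sigmaBlock {d n K : ℕ} (A : Matrix (Fin d) (Fin n) ℝ) (part : Fin n → Fin K)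
    (k : Fin K) : ℝ :=
  sSup {r : ℝ | ∃ β : Fin n → ℝ, β ≠ 0 ∧ supportedOn part k β ∧
    r = sqnorm (A.mulVec β) / sqnorm β}

/-- The primal objective `D(α) = f(Aα) + Σᵢ ℓᵢ(αᵢ)`, extended-real valued. -/
def Dobj {d n : ℕ} (f : (Fin d → ℝ) → ℝ) (A : Matrix (Fin d) (Fin n) ℝ)
    (ℓ : Fin n → ℝ → EReal) (α : Fin n → ℝ) : EReal :=
  (f (A.mulVec α) : EReal) + ∑ i, ℓ i (α i)

/-- The local subproblem objective
`G_k^{σ'}(Δ; v, α) = f(v)/K + ∇f(v)ᵀ A Δ + σ'/(2τ) ‖AΔ‖² + Σ_{i ∈ P_k} ℓᵢ(αᵢ + Δᵢ)`. -/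
def Gk {d n K : ℕ} (f : (Fin d → ℝ) → ℝ) (f' : (Fin d → ℝ) → Fin d → ℝ)
    (A : Matrix (Fin d) (Fin n) ℝ) (ℓ : Fin n → ℝ → EReal) (part : Fin n → Fin K)
    (τ σ' : ℝ) (k : Fin K) (v : Fin d → ℝ) (α Δ : Fin n → ℝ) : EReal :=
  ((f v / K + dotp (f' v) (A.mulVec Δ) + σ' / (2 * τ) * sqnorm (A.mulVec Δ) : ℝ) : EReal)
    + ∑ i ∈ block part k, ℓ i (α i + Δ i)

/-- Fenchel conjugate of a scalar extended-real-valued function. -/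
def conj (g : ℝ → EReal) (z : ℝ) : EReal := ⨆ a : ℝ, ((z * a : ℝ) : EReal) - g a

/-- Fenchel conjugate of the (real-valued) smooth part `f`. -/
def fconj {d : ℕ} (f : (Fin d → ℝ) → ℝ) (w : Fin d → ℝ) : EReal :=
  ⨆ v : Fin d → ℝ, ((dotp w v - f v : ℝ) : EReal)

/-- The dual objective `P(w) = f*(w) + Σᵢ ℓᵢ*(-xᵢᵀ w)`. -/
def Pobj {d n : ℕ} (f : (Fin d → ℝ) → ℝ) (A : Matrix (Fin d) (Fin n) ℝ)
    (ℓ : Fin n → ℝ → EReal) (w : Fin d → ℝ) : EReal :=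
  fconj f w + ∑ i, conj (ℓ i) (-(dotp (col A i) w))

/-- The duality gap `G(α) = P(w(α)) + D(α)`, with `w(α) = ∇f(Aα)`. -/
def gap {d n : ℕ} (f : (Fin d → ℝ) → ℝ) (f' : (Fin d → ℝ) → Fin d → ℝ)
    (A : Matrix (Fin d) (Fin n) ℝ) (ℓ : Fin n → ℝ → EReal) (α : Fin n → ℝ) : EReal :=
  Pobj f A ℓ (f' (A.mulVec α)) + Dobj f A ℓ α

/-- `u ∈ ∂g*(z)`: `u` is a subgradient of the conjugate of `g` at `z`. -/
def IsConjSubgradient (g : ℝ → EReal) (z u : ℝ) : Prop :=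
  ∀ y : ℝ, conj g z + ((u * (y - z) : ℝ) : EReal) ≤ conj g y

/-- `g` is proper: never `-∞`, finite somewhere. -/
def ProperFn (g : ℝ → EReal) : Prop := (∀ a, g a ≠ ⊥) ∧ ∃ a, g a ≠ ⊤

/-- `μ`-strong convexity of an extended-real-valued function (`μ = 0` is plain convexity). -/
def StronglyConvexFn (μ : ℝ) (g : ℝ → EReal) : Prop :=
  ∀ a b t : ℝ, 0 ≤ t → t ≤ 1 →
    g (t * a + (1 - t) * b) + ((μ / 2 * t * (1 - t) * (a - b) ^ 2 : ℝ) : EReal)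
      ≤ (t : EReal) * g a + ((1 - t : ℝ) : EReal) * g b

/-- `f'` is a gradient certifying convexity of `f` (first-order lower bound). -/
def ConvexWithGrad {d : ℕ} (f : (Fin d → ℝ) → ℝ) (f' : (Fin d → ℝ) → Fin d → ℝ) : Prop :=
  ∀ u v : Fin d → ℝ, f v + dotp (f' v) (u - v) ≤ f u

/-- `f` is `(1/τ)`-smooth with gradient `f'` (first-order quadratic upper bound). -/
def SmoothWithGrad {d : ℕ} (τ : ℝ) (f : (Fin d → ℝ) → ℝ)
    (f' : (Fin d → ℝ) → Fin d → ℝ) : Prop :=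
  ∀ u v : Fin d → ℝ, f u ≤ f v + dotp (f' v) (u - v) + 1 / (2 * τ) * sqnorm (u - v)

/-- `Δ` is a `Θ`-approximate solution of the `k`-th local subproblem at `(v, α)`. -/
def ThetaApprox {d n K : ℕ} (f : (Fin d → ℝ) → ℝ) (f' : (Fin d → ℝ) → Fin d → ℝ)
    (A : Matrix (Fin d) (Fin n) ℝ) (ℓ : Fin n → ℝ → EReal) (part : Fin n → Fin K)
    (τ σ' Θ : ℝ) (k : Fin K) (v : Fin d → ℝ) (α Δ : Fin n → ℝ) : Prop :=
  supportedOn part k Δ ∧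
    ∃ Δs : Fin n → ℝ, supportedOn part k Δs ∧
      (∀ Δ' : Fin n → ℝ, supportedOn part k Δ' →
        Gk f f' A ℓ part τ σ' k v α Δs ≤ Gk f f' A ℓ part τ σ' k v α Δ') ∧
      Gk f f' A ℓ part τ σ' k v α Δ - Gk f f' A ℓ part τ σ' k v α Δs
        ≤ (Θ : EReal) * (Gk f f' A ℓ part τ σ' k v α 0 - Gk f f' A ℓ part τ σ' k v α Δs)




lemma ereal_mul_ne_bot (c : ℝ) (hc : 0 < c) (x : EReal) (hx : x ≠ ⊥) :
    (c : EReal) * x ≠ ⊥ := by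
  induction x using EReal.rec with
  | bot => exact absurd rfl hx
  | coe a => rw [← EReal.coe_mul]; exact EReal.coe_ne_bot _
  | top => rw [EReal.coe_mul_top_of_pos hc]; exact (by simp)

lemma ereal_mul_add (c : ℝ) (hc : 0 ≤ c) (x y : EReal) (hx : x ≠ ⊥) (hy : y ≠ ⊥) :
    (c : EReal) * (x + y) = (c : EReal) * x + (c : EReal) * y := by
  rcases hc.eq_or_lt with h | h
  · simp [← h]
  · induction x using EReal.rec with
    | bot => exact absurd rfl hx
    | coe a =>
      induction y using EReal.rec with
      | bot => exact absurd rfl hy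
      | coe b => norm_cast; ring
      | top =>
        rw [EReal.add_top_of_ne_bot (EReal.coe_ne_bot _), EReal.coe_mul_top_of_pos h,
          EReal.add_top_of_ne_bot (ereal_mul_ne_bot c h _ (EReal.coe_ne_bot _))]
    | top =>
      rw [EReal.top_add_of_ne_bot hy, EReal.coe_mul_top_of_pos h,
        EReal.top_add_of_ne_bot (ereal_mul_ne_bot c h _ hy)]

lemma ereal_sum_ne_bot {ι : Type*} (s : Finset ι) (g : ι → EReal) (h : ∀ i ∈ s, g i ≠ ⊥) :
    ∑ i ∈ s, g i ≠ ⊥ := by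
  classical
  induction s using Finset.induction with
  | empty => simp
  | insert _ _ hni ih =>
    rename_i a s'
    rw [Finset.sum_insert hni]
    intro hb
    rcases EReal.add_eq_bot_iff.1 hb with h1 | h1
    · exact h a (Finset.mem_insert_self a s') h1
    · exact ih (fun i hi => h i (Finset.mem_insert_of_mem hi)) h1

lemma ereal_mul_sum (c : ℝ) (hc : 0 ≤ c) {ι : Type*} (s : Finset ι) (g : ι → EReal)
    (h : ∀ i ∈ s, g i ≠ ⊥) :
    (c : EReal) * ∑ i ∈ s, g i = ∑ i ∈ s, (c : EReal) * g i := by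
  classical
  induction s using Finset.induction with
  | empty => simp
  | insert _ _ hni ih =>
    rename_i a s' 
    rw [Finset.sum_insert hni, Finset.sum_insert hni,
      ereal_mul_add c hc _ _ (h a (Finset.mem_insert_self a s'))
        (ereal_sum_ne_bot s' g (fun i hi => h i (Finset.mem_insert_of_mem hi))),
      ih (fun i hi => h i (Finset.mem_insert_of_mem hi))]

lemma ereal_coe_sum {ι : Type*} (s : Finset ι) (g : ι → ℝ) :
    ((∑ i ∈ s, g i : ℝ) : EReal) = ∑ i ∈ s, ((g i : ℝ) : EReal) := by
  classical
  induction s using Finset.induction with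
  | empty => simp
  | insert _ _ hni ih => rename_i a s'; rw [Finset.sum_insert hni, Finset.sum_insert hni, EReal.coe_add, ih]


/-- Lemma 1 of the paper: the local subproblems upper-bound the
change in the global objective. -/
theorem subproblem_upper_bound {d n K : ℕ} (hK : 0 < K)
    (A : Matrix (Fin d) (Fin n) ℝ) (part : Fin n → Fin K)
    (f : (Fin d → ℝ) → ℝ) (f' : (Fin d → ℝ) → Fin d → ℝ)
    (ℓ : Fin n → ℝ → EReal) (τ : ℝ) (hτ : 0 < τ)
    (hfconv : ConvexWithGrad f f') (hfsmooth : SmoothWithGrad τ f f')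
    (hℓproper : ∀ i, ProperFn (ℓ i)) (hℓconv : ∀ i, StronglyConvexFn 0 (ℓ i))
    (γ σ' : ℝ) (hγ0 : 0 < γ) (hγ1 : γ ≤ 1) (hσ' : 0 < σ')
    (hsafe : ∀ β : Fin n → ℝ,
      sqnorm (A.mulVec β) ≤ σ' / γ * ∑ k, sqnorm (A.mulVec (restr part k β)))
    (α Δα : Fin n → ℝ) :
    Dobj f A ℓ (α + γ • ∑ k, restr part k Δα)
      ≤ ((1 - γ : ℝ) : EReal) * Dobj f A ℓ α
        + (γ : EReal) * ∑ k, Gk f f' A ℓ part τ σ' k (A.mulVec α) α (restr part k Δα) := by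
  classical
  set v := A.mulVec α with hv
  set g := f' v with hg
  -- the restrictions sum to the full vector
  have hΔ : ∑ k, restr part k Δα = Δα := by
    funext i
    simp [restr, Finset.sum_apply, Finset.sum_ite_eq]
  rw [hΔ]
  set w : Fin K → Fin d → ℝ := fun k => A.mulVec (restr part k Δα) with hwdef
  set u : Fin d → ℝ := A.mulVec Δα with hu
  have hw : u = ∑ k, w k := by
    rw [hu, ← hΔ]
    simp only [hwdef]
    rw [← Matrix.mulVecLin_apply, map_sum]
    simp [Matrix.mulVecLin_apply]
  -- linearity facts for dotp / sqnorm
  have hdotp_smul : ∀ (x : Fin d → ℝ), dotp g (γ • x) = γ * dotp g x := by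
    intro x; simp [dotp, Finset.mul_sum]; ring_nf; simp [mul_comm, mul_assoc, mul_left_comm]
  have hdotp_sum : dotp g u = ∑ k, dotp g (w k) := by
    rw [hw]
    simp only [dotp, Finset.sum_apply, Finset.mul_sum]
    rw [Finset.sum_comm]
  have hsq_smul : sqnorm (γ • u) = γ ^ 2 * sqnorm u := by
    simp [sqnorm, Finset.mul_sum]; ring_nf
  -- real part inequality
  have hAv : A.mulVec (α + γ • Δα) = v + γ • u := by
    rw [hu, hv, Matrix.mulVec_add, Matrix.mulVec_smul]
  have hsmooth := hfsmooth (v + γ • u) v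
  have harg : (v + γ • u) - v = γ • u := by abel
  rw [harg] at hsmooth
  have hsafe' : sqnorm u ≤ σ' / γ * ∑ k, sqnorm (w k) := hsafe Δα
  set S : ℝ := ∑ k, sqnorm (w k) with hS
  have hreal : f (A.mulVec (α + γ • Δα))
      ≤ f v + γ * dotp g u + γ * σ' / (2 * τ) * S := by
    rw [hAv]
    refine hsmooth.trans ?_
    rw [hdotp_smul, hsq_smul]
    have h1 : 1 / (2 * τ) * (γ ^ 2 * sqnorm u) ≤ γ * σ' / (2 * τ) * S := by
      have h2 : γ ^ 2 * sqnorm u ≤ γ ^ 2 * (σ' / γ * S) :=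
        mul_le_mul_of_nonneg_left hsafe' (sq_nonneg γ)
      have h3 : γ ^ 2 * (σ' / γ * S) = γ * σ' * S := by
        field_simp
      calc 1 / (2 * τ) * (γ ^ 2 * sqnorm u) ≤ 1 / (2 * τ) * (γ ^ 2 * (σ' / γ * S)) := by
            apply mul_le_mul_of_nonneg_left h2
            positivity
        _ = γ * σ' / (2 * τ) * S := by rw [h3]; ring
    linarith
  -- sum of subproblem real parts
  set r : Fin K → ℝ := fun k => f v / K + dotp g (w k) + σ' / (2 * τ) * sqnorm (w k) with hr
  have hrsum : ∑ k, r k = f v + dotp g u + σ' / (2 * τ) * S := by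
    rw [hr]
    simp only [Finset.sum_add_distrib]
    rw [hdotp_sum, ← Finset.mul_sum, ← hS]
    have : ∑ _k : Fin K, f v / K = f v := by
      rw [Finset.sum_const, Finset.card_univ, Fintype.card_fin, nsmul_eq_mul]
      field_simp
    rw [this]
  have hRR : f v + γ * dotp g u + γ * σ' / (2 * τ) * S
      = (1 - γ) * f v + γ * ∑ k, r k := by
    rw [hrsum]; ring
  -- EReal: convexity of each ℓ i
  have hconv : ∀ i : Fin n, ℓ i (α i + γ * Δα i)
      ≤ (γ : EReal) * ℓ i (α i + Δα i) + ((1 - γ : ℝ) : EReal) * ℓ i (α i) := by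
    intro i
    have h := hℓconv i (α i + Δα i) (α i) γ hγ0.le hγ1
    have harg2 : γ * (α i + Δα i) + (1 - γ) * α i = α i + γ * Δα i := by ring
    rw [harg2] at h
    simpa using h
  -- Gk sums: rewrite restr inside blocks
  have hGk : ∀ k, Gk f f' A ℓ part τ σ' k v α (restr part k Δα)
      = ((r k : ℝ) : EReal) + ∑ i ∈ block part k, ℓ i (α i + Δα i) := by
    intro k
    unfold Gk
    congr 1
    refine Finset.sum_congr rfl (fun i hi => ?_)
    have : part i = k := (Finset.mem_filter.1 hi).2
    rw [restr, if_pos this]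
  have hblocks : ∑ k, ∑ i ∈ block part k, ℓ i (α i + Δα i) = ∑ i, ℓ i (α i + Δα i) := by
    exact Finset.sum_fiberwise Finset.univ part _
  have hGksum : ∑ k, Gk f f' A ℓ part τ σ' k v α (restr part k Δα)
      = ((∑ k, r k : ℝ) : EReal) + ∑ i, ℓ i (α i + Δα i) := by
    simp_rw [hGk]
    rw [Finset.sum_add_distrib, hblocks, ereal_coe_sum]
  -- not-⊥ facts
  have hMne : ∀ i : Fin n, ℓ i (α i + Δα i) ≠ ⊥ := fun i => (hℓproper i).1 _
  have hLne : ∀ i : Fin n, ℓ i (α i) ≠ ⊥ := fun i => (hℓproper i).1 _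
  have hMsne : ∑ i, ℓ i (α i + Δα i) ≠ ⊥ := ereal_sum_ne_bot _ _ (fun i _ => hMne i)
  have hLsne : ∑ i, ℓ i (α i) ≠ ⊥ := ereal_sum_ne_bot _ _ (fun i _ => hLne i)
  -- put everything together
  have hγ1' : (0:ℝ) ≤ 1 - γ := by linarith
  unfold Dobj
  have hargs : ∀ i : Fin n, (α + γ • Δα) i = α i + γ * Δα i := by intro i; simp
  calc (f (A.mulVec (α + γ • Δα)) : EReal) + ∑ i, ℓ i ((α + γ • Δα) i)
      ≤ ((f v + γ * dotp g u + γ * σ' / (2 * τ) * S : ℝ) : EReal)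
        + ∑ i, ((γ : EReal) * ℓ i (α i + Δα i) + ((1 - γ : ℝ) : EReal) * ℓ i (α i)) := by
        apply add_le_add
        · exact EReal.coe_le_coe_iff.2 hreal
        · refine Finset.sum_le_sum (fun i _ => ?_)
          rw [hargs i]; exact hconv i
    _ = (((1 - γ) * f v : ℝ) : EReal) + ((1 - γ : ℝ) : EReal) * ∑ i, ℓ i (α i)
        + ((γ * ∑ k, r k : ℝ) : EReal) + (γ : EReal) * ∑ i, ℓ i (α i + Δα i) := by
        have hsplit : (∑ i, ((γ : EReal) * ℓ i (α i + Δα i)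
              + ((1 - γ : ℝ) : EReal) * ℓ i (α i)))
            = (γ : EReal) * ∑ i, ℓ i (α i + Δα i)
              + ((1 - γ : ℝ) : EReal) * ∑ i, ℓ i (α i) := by
          rw [Finset.sum_add_distrib, ← ereal_mul_sum γ hγ0.le _ _ (fun i _ => hMne i),
            ← ereal_mul_sum (1 - γ) hγ1' _ _ (fun i _ => hLne i)]
        rw [hRR, hsplit, EReal.coe_add]
        abel
    _ = ((1 - γ : ℝ) : EReal) * ((f v : EReal) + ∑ i, ℓ i (α i))
        + (γ : EReal) * (((∑ k, r k : ℝ) : EReal) + ∑ i, ℓ i (α i + Δα i)) := by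
        rw [ereal_mul_add (1 - γ) hγ1' _ _ (EReal.coe_ne_bot _) hLsne,
          ereal_mul_add γ hγ0.le _ _ (EReal.coe_ne_bot _) hMsne,
          ← EReal.coe_mul, ← EReal.coe_mul]
        abel
    _ = ((1 - γ : ℝ) : EReal) * ((f v : EReal) + ∑ i, ℓ i (α i))
        + (γ : EReal) * ∑ k, Gk f f' A ℓ part τ σ' k v α (restr part k Δα) := by
        rw [hGksum]

end ProxCoCoA
end
end

section
/- Let α ∈ ℝ^n with D(α) < ∞, let each ℓ_i be μ-strongly convex with μ ≥ 0, let s ∈ (0,1], and let u ∈ ℝ^n satisfy u_i ∈ ∂ℓ*_i(−x_i^T w(α)) for every i. Then D(α) − Σ_{k=1}^K G_k^{σ'}(s(u − α)_[k]; Aα, α_[k]) ≥ s·G(α) + (μ/2)(1 − s)s‖u − α‖² − (σ' s²/(2τ)) Σ_{k=1}^K ‖A(u − α)_[k]‖². -/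
open scoped BigOperators

noncomputable section

namespace ProxCoCoA

/-! ### Auxiliary lemmas -/

/-- convexity of an `EReal`-valued function on `ℝ` -/
def ConvexFnE (g : ℝ → EReal) : Prop :=
  ∀ a b t : ℝ, 0 ≤ t → t ≤ 1 →
    g (t * a + (1 - t) * b) ≤ (t : EReal) * g a + ((1 - t : ℝ) : EReal) * g b

lemma coe_sum {ι : Type*} (s : Finset ι) (f : ι → ℝ) :
    ((∑ i ∈ s, f i : ℝ) : EReal) = ∑ i ∈ s, (↑(f i) : EReal) := by
  induction s using Finset.cons_induction with
  | empty => simp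
  | cons a s ha ih => rw [Finset.sum_cons, Finset.sum_cons, EReal.coe_add, ih]

lemma sum_ne_bot {ι : Type*} (s : Finset ι) (h : ι → EReal) (hb : ∀ i ∈ s, h i ≠ ⊥) :
    ∑ i ∈ s, h i ≠ ⊥ := by
  induction s using Finset.cons_induction with
  | empty => simp
  | cons a s ha ih =>
    rw [Finset.sum_cons]
    intro hcon
    rcases EReal.add_eq_bot_iff.1 hcon with h1 | h1
    · exact hb a (Finset.mem_cons_self a s) h1
    · exact ih (fun i hi => hb i (Finset.mem_cons_of_mem hi)) h1

/-- The epigraph in `ℝ × ℝ` is closed when `g` is lsc. -/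
lemma epi_closed {g : ℝ → EReal} (h : LowerSemicontinuous g) :
    IsClosed {p : ℝ × ℝ | g p.1 ≤ (p.2 : EReal)} := by
  have h2 : IsClosed {p : ℝ × EReal | g p.1 ≤ p.2} := h.isClosed_epigraph
  have : {p : ℝ × ℝ | g p.1 ≤ (p.2 : EReal)} =
      (fun p : ℝ × ℝ => (p.1, (p.2 : EReal))) ⁻¹' {p : ℝ × EReal | g p.1 ≤ p.2} := rfl
  rw [this]
  exact h2.preimage (continuous_fst.prodMk (continuous_coe_real_ereal.comp continuous_snd))

/-- The epigraph is convex. -/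
lemma epi_convex {g : ℝ → EReal} (hconv : ConvexFnE g) (hbot : ∀ a, g a ≠ ⊥) :
    Convex ℝ {p : ℝ × ℝ | g p.1 ≤ (p.2 : EReal)} := by
  rintro ⟨a, t⟩ hat ⟨b, s⟩ hbs θ θ' hθ hθ' hsum
  simp only [Set.mem_setOf_eq] at hat hbs ⊢
  have hθ'' : θ' = 1 - θ := by linarith
  subst hθ''
  have ha' : g a ≠ ⊤ := fun h => by simp [h] at hat
  have hb' : g b ≠ ⊤ := fun h => by simp [h] at hbs
  lift g a to ℝ using ⟨ha', hbot a⟩ with ga hga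
  lift g b to ℝ using ⟨hb', hbot b⟩ with gb hgb
  have h1 := hconv a b θ hθ (by linarith)
  rw [← hga, ← hgb] at h1
  have hta : ga ≤ t := by exact_mod_cast hat
  have htb : gb ≤ s := by exact_mod_cast hbs
  calc g (θ • (a, t) + (1 - θ) • (b, s)).1 = g (θ * a + (1 - θ) * b) := by
        simp [Prod.smul_def, smul_eq_mul]
    _ ≤ (θ : EReal) * (ga : EReal) + ((1 - θ : ℝ) : EReal) * (gb : EReal) := h1
    _ = ((θ * ga + (1 - θ) * gb : ℝ) : EReal) := by
        rw [← EReal.coe_mul, ← EReal.coe_mul, ← EReal.coe_add]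
    _ ≤ (((θ • (a, t) + (1 - θ) • (b, s)).2 : ℝ) : EReal) := by
        have e2 : (θ • (a, t) + (1 - θ) • (b, s)).2 = θ * t + (1 - θ) * s := by
          simp [Prod.smul_def, smul_eq_mul]
        rw [e2]
        apply EReal.coe_le_coe_iff.2
        have h3 := mul_le_mul_of_nonneg_left hta hθ
        have h4 := mul_le_mul_of_nonneg_left htb (by linarith : (0:ℝ) ≤ 1 - θ)
        linarith

/-- Separation of a point strictly below the epigraph. -/
lemma epi_sep {g : ℝ → EReal} (hconv : ConvexFnE g) (hbot : ∀ a, g a ≠ ⊥)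
    (hlsc : LowerSemicontinuous g) {p q : ℝ} (hp : ¬ g p ≤ (q : EReal)) :
    ∃ c₁ c₂ β : ℝ, c₁ * p + c₂ * q < β ∧ ∀ a t : ℝ, g a ≤ (t : EReal) → β < c₁ * a + c₂ * t := by
  obtain ⟨f, β, h1, h2⟩ := geometric_hahn_banach_point_closed
    (epi_convex hconv hbot) (epi_closed hlsc) (x := ((p, q) : ℝ × ℝ))
    (by simpa using hp)
  refine ⟨f (1, 0), f (0, 1), β, ?_, ?_⟩
  · have e : ((p, q) : ℝ × ℝ) = p • ((1:ℝ), (0:ℝ)) + q • ((0:ℝ), (1:ℝ)) := by ext <;> simp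
    calc f (1,0) * p + f (0,1) * q = f (p, q) := by
          rw [e, map_add, map_smul, map_smul, smul_eq_mul, smul_eq_mul]; ring
      _ < β := h1
  · intro a t hat
    have e : ((a, t) : ℝ × ℝ) = a • ((1:ℝ), (0:ℝ)) + t • ((0:ℝ), (1:ℝ)) := by ext <;> simp
    calc β < f (a, t) := h2 _ hat
      _ = f (1,0) * a + f (0,1) * t := by
          rw [e, map_add, map_smul, map_smul, smul_eq_mul, smul_eq_mul]; ring

lemma c2_nonneg {c₁ c₂ β a₀ L : ℝ} (h : ∀ t : ℝ, L ≤ t → β < c₁ * a₀ + c₂ * t) : 0 ≤ c₂ := by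
  by_contra hc
  push_neg at hc
  have h1 := h (max L ((β - c₁ * a₀) / c₂)) (le_max_left _ _)
  have h2 : c₂ * max L ((β - c₁ * a₀) / c₂) ≤ β - c₁ * a₀ := by
    have h3 : (β - c₁ * a₀) / c₂ ≤ max L ((β - c₁ * a₀) / c₂) := le_max_right _ _
    have h4 : c₂ * max L ((β - c₁ * a₀) / c₂) ≤ c₂ * ((β - c₁ * a₀) / c₂) := by nlinarith
    have h5 : c₂ * ((β - c₁ * a₀) / c₂) = β - c₁ * a₀ := by
      rw [mul_comm, div_mul_cancel₀ _ (ne_of_lt hc)]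
    linarith
  linarith

lemma sep_minorant {g : ℝ → EReal} (hbot : ∀ a, g a ≠ ⊥) {c₁ c₂ β : ℝ} (hc₂ : 0 < c₂)
    (hs : ∀ a t : ℝ, g a ≤ (t : EReal) → β < c₁ * a + c₂ * t) (a : ℝ) :
    ((β / c₂ + (-c₁ / c₂) * a : ℝ) : EReal) ≤ g a := by
  by_cases hT : g a = ⊤
  · rw [hT]; exact le_top
  · lift g a to ℝ using ⟨hT, hbot a⟩ with r hr
    have h1 := hs a r (le_of_eq hr.symm)
    apply EReal.coe_le_coe_iff.2
    have e : β / c₂ + -c₁ / c₂ * a = (β - c₁ * a) / c₂ := by field_simp; ring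
    rw [e, div_le_iff₀ hc₂]
    nlinarith

lemma minorant_conj {g : ℝ → EReal} {m M : ℝ}
    (hmin : ∀ a, ((M + m * a : ℝ) : EReal) ≤ g a) : conj g m ≤ ((-M : ℝ) : EReal) := by
  refine iSup_le fun a => ?_
  calc ((m * a : ℝ) : EReal) - g a ≤ ((m * a : ℝ) : EReal) - ((M + m * a : ℝ) : EReal) :=
        EReal.sub_le_sub le_rfl (hmin a)
    _ = ((-M : ℝ) : EReal) := by rw [← EReal.coe_sub]; norm_cast; ring

/-- Key 1D conjugate-subgradient lemma (Fenchel–Moreau style). -/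
lemma conj_subgrad {g : ℝ → EReal} (hconv : ConvexFnE g) (hbot : ∀ a, g a ≠ ⊥)
    (hlsc : LowerSemicontinuous g) {a₀ L : ℝ} (ha₀ : g a₀ = (L : EReal))
    {z u : ℝ} (hu : ∀ y : ℝ, conj g z + ((u * (y - z) : ℝ) : EReal) ≤ conj g y) :
    ∃ C U : ℝ, conj g z = (C : EReal) ∧ g u = (U : EReal) ∧ C + U ≤ z * u := by
  obtain ⟨c₁, c₂, β, hlt, hs⟩ := epi_sep hconv hbot hlsc (p := a₀) (q := L - 1)
    (by rw [ha₀]; intro h; have := EReal.coe_le_coe_iff.1 h; linarith)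
  have hc₂0 : 0 ≤ c₂ := c2_nonneg (a₀ := a₀) (L := L)
    (fun t ht => hs a₀ t (by rw [ha₀]; exact_mod_cast ht))
  have hc₂ : 0 < c₂ := by
    rcases hc₂0.lt_or_eq with h | h
    · exact h
    · exfalso
      have h1 := hs a₀ L (le_of_eq ha₀)
      rw [← h] at hlt h1
      simp only [zero_mul] at hlt h1
      linarith
  have hmin0 := sep_minorant hbot hc₂ hs
  have hconj0 := minorant_conj hmin0
  have hCbot : ((z * a₀ - L : ℝ) : EReal) ≤ conj g z := by
    have h1 := le_iSup (fun a => ((z * a : ℝ) : EReal) - g a) a₀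
    rw [ha₀, ← EReal.coe_sub] at h1
    exact h1
  have hCnbot : conj g z ≠ ⊥ := fun h => EReal.coe_ne_bot _ (le_bot_iff.1 (h ▸ hCbot))
  have hCntop : conj g z ≠ ⊤ := by
    intro htop
    have h1 := hu (-c₁ / c₂)
    rw [htop, EReal.top_add_coe] at h1
    exact absurd (h1.trans hconj0) (by simp)
  set C := (conj g z).toReal with hCdef
  have hCz : conj g z = (C : EReal) := (EReal.coe_toReal hCntop hCnbot).symm
  have hgu : g u ≤ ((z * u - C : ℝ) : EReal) := by
    by_contra hgu
    obtain ⟨c₁', c₂', β', hlt', hs'⟩ := epi_sep hconv hbot hlsc hgu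
    have hc₂'0 : 0 ≤ c₂' := c2_nonneg (a₀ := a₀) (L := L)
      (fun t ht => hs' a₀ t (by rw [ha₀]; exact_mod_cast ht))
    rcases hc₂'0.lt_or_eq with hpos | heq
    · have hmin := sep_minorant hbot hpos hs'
      have hconj := minorant_conj hmin
      have h1 := hu ((-c₁' / c₂'))
      rw [hCz] at h1
      have h2 : ((C + u * (-c₁' / c₂' - z) : ℝ) : EReal) ≤ ((-(β' / c₂') : ℝ) : EReal) := by
        rw [EReal.coe_add]; exact h1.trans hconj
      have h3 : C + u * (-c₁' / c₂' - z) ≤ -(β' / c₂') := EReal.coe_le_coe_iff.1 h2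
      have h4 : z * u - C < (β' - c₁' * u) / c₂' := by
        rw [lt_div_iff₀ hpos]; nlinarith
      have h6 : (β' - c₁' * u) / c₂' = β' / c₂' + (-c₁' / c₂') * u := by field_simp; ring
      rw [h6] at h4
      nlinarith
    · have key : conj g (z - c₁') ≤ ((C - β' : ℝ) : EReal) := by
        refine iSup_le fun a => ?_
        by_cases hT : g a = ⊤
        · rw [hT, EReal.sub_top]
          exact bot_le
        · lift g a to ℝ using ⟨hT, hbot a⟩ with r hr
          have h5 := hs' a r (le_of_eq hr.symm)
          rw [← heq, zero_mul, add_zero] at h5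
          have h6 : ((z * a - r : ℝ) : EReal) ≤ conj g z := by
            have h7 := le_iSup (fun a' => ((z * a' : ℝ) : EReal) - g a') a
            rw [← hr, ← EReal.coe_sub] at h7
            exact h7
          rw [hCz] at h6
          have h7 : z * a - r ≤ C := EReal.coe_le_coe_iff.1 h6
          rw [← EReal.coe_sub]
          apply EReal.coe_le_coe_iff.2
          nlinarith
      have h1 := hu (z - c₁')
      rw [hCz] at h1
      have h2 : ((C + u * (z - c₁' - z) : ℝ) : EReal) ≤ ((C - β' : ℝ) : EReal) := by
        rw [EReal.coe_add]; exact h1.trans key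
      have h3 : C + u * (z - c₁' - z) ≤ C - β' := EReal.coe_le_coe_iff.1 h2
      rw [← heq, zero_mul, add_zero] at hlt'
      nlinarith
  have hgnt : g u ≠ ⊤ := fun h => (EReal.coe_lt_top _).not_ge (h ▸ hgu)
  lift g u to ℝ using ⟨hgnt, hbot u⟩ with U hU
  exact ⟨C, U, hCz, rfl, by have := EReal.coe_le_coe_iff.1 hgu; linarith⟩

lemma dotp_sub {m : ℕ} (a x y : Fin m → ℝ) : dotp a (x - y) = dotp a x - dotp a y := by
  simp [dotp, Pi.sub_apply, mul_sub, Finset.sum_sub_distrib]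

lemma dotp_smul {m : ℕ} (a : Fin m → ℝ) (s : ℝ) (x : Fin m → ℝ) :
    dotp a (s • x) = s * dotp a x := by
  simp only [dotp, Pi.smul_apply, smul_eq_mul, Finset.mul_sum]
  exact Finset.sum_congr rfl fun j _ => by ring

lemma sqnorm_smul {m : ℕ} (s : ℝ) (x : Fin m → ℝ) : sqnorm (s • x) = s ^ 2 * sqnorm x := by
  simp [sqnorm, Pi.smul_apply, smul_eq_mul, mul_pow, Finset.mul_sum]

lemma restr_smul {n K : ℕ} (part : Fin n → Fin K) (k : Fin K) (s : ℝ) (β : Fin n → ℝ) :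
    restr part k (s • β) = s • restr part k β := by
  funext i
  simp only [restr, Pi.smul_apply, smul_eq_mul]
  split <;> simp

lemma sum_restr {n K : ℕ} (part : Fin n → Fin K) (β : Fin n → ℝ) (i : Fin n) :
    ∑ k, restr part k β i = β i := by
  simp [restr]

lemma dotp_mulVec {d n : ℕ} (w : Fin d → ℝ) (A : Matrix (Fin d) (Fin n) ℝ) (β : Fin n → ℝ) :
    dotp w (A.mulVec β) = ∑ i, β i * dotp (col A i) w := by
  unfold dotp Matrix.mulVec dotProduct col
  calc ∑ j, w j * (∑ i, A j i * β i) = ∑ j, ∑ i, w j * (A j i * β i) := by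
        exact Finset.sum_congr rfl fun j _ => by rw [Finset.mul_sum]
    _ = ∑ i, ∑ j, w j * (A j i * β i) := Finset.sum_comm
    _ = ∑ i, β i * ∑ j, A j i * w j := by
        refine Finset.sum_congr rfl fun i _ => ?_
        rw [Finset.mul_sum]
        exact Finset.sum_congr rfl fun j _ => by ring

lemma sum_dotp_restr {d n K : ℕ} (w : Fin d → ℝ) (A : Matrix (Fin d) (Fin n) ℝ)
    (part : Fin n → Fin K) (β : Fin n → ℝ) :
    ∑ k, dotp w (A.mulVec (restr part k β)) = dotp w (A.mulVec β) := by
  simp only [dotp_mulVec]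
  rw [Finset.sum_comm]
  refine Finset.sum_congr rfl fun i _ => ?_
  rw [← Finset.sum_mul, sum_restr]

lemma mulVec_smul_real {d n : ℕ} (A : Matrix (Fin d) (Fin n) ℝ) (s : ℝ) (x : Fin n → ℝ) :
    A.mulVec (s • x) = s • A.mulVec x := by
  funext j
  simp only [Matrix.mulVec, dotProduct, Pi.smul_apply, smul_eq_mul, Finset.mul_sum]
  exact Finset.sum_congr rfl fun i _ => by ring

lemma fconj_eq {d : ℕ} {f : (Fin d → ℝ) → ℝ} {f' : (Fin d → ℝ) → Fin d → ℝ}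
    (hconv : ConvexWithGrad f f') (v : Fin d → ℝ) :
    fconj f (f' v) = ((dotp (f' v) v - f v : ℝ) : EReal) := by
  apply le_antisymm
  · refine iSup_le fun y => ?_
    apply EReal.coe_le_coe_iff.2
    have h1 := hconv y v
    rw [dotp_sub] at h1
    linarith
  · exact le_iSup (fun y => ((dotp (f' v) y - f y : ℝ) : EReal)) v

/-- inner bound of Lemma 5 of the paper: lower bound on the
improvement `D(α) − Σ_k G_k^{σ'}(s(u−α)_[k]; Aα, α_[k])` in terms of the duality gap. -/
theorem subproblem_gap_lower_bound {d n K : ℕ} (hK : 0 < K)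
    (A : Matrix (Fin d) (Fin n) ℝ) (part : Fin n → Fin K)
    (f : (Fin d → ℝ) → ℝ) (f' : (Fin d → ℝ) → Fin d → ℝ)
    (ℓ : Fin n → ℝ → EReal) (τ : ℝ) (hτ : 0 < τ)
    (hfconv : ConvexWithGrad f f') (hfsmooth : SmoothWithGrad τ f f')
    (hℓproper : ∀ i, ProperFn (ℓ i)) (hℓlsc : ∀ i, LowerSemicontinuous (ℓ i))
    (μ : ℝ) (hμ : 0 ≤ μ) (hℓsc : ∀ i, StronglyConvexFn μ (ℓ i))
    (σ' : ℝ) (hσ' : 0 < σ')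
    (α : Fin n → ℝ) (hα : Dobj f A ℓ α < ⊤)
    (s : ℝ) (hs0 : 0 < s) (hs1 : s ≤ 1)
    (u : Fin n → ℝ)
    (hu : ∀ i, IsConjSubgradient (ℓ i) (-(dotp (col A i) (f' (A.mulVec α)))) (u i)) :
    (s : EReal) * gap f f' A ℓ α
        + ((μ / 2 * (1 - s) * s * sqnorm (u - α) : ℝ) : EReal)
        - ((σ' * s ^ 2 / (2 * τ) * ∑ k, sqnorm (A.mulVec (restr part k (u - α))) : ℝ) : EReal)
      ≤ Dobj f A ℓ α
        - ∑ k, Gk f f' A ℓ part τ σ' k (A.mulVec α) α (restr part k (s • (u - α))) := by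
  classical
  have hbot : ∀ i, ∀ a, ℓ i a ≠ ⊥ := fun i => (hℓproper i).1
  set w := f' (A.mulVec α) with hw
  -- each ℓ i (α i) is finite
  have hsum_ne_top : (∑ i, ℓ i (α i)) ≠ ⊤ := by
    intro h
    rw [Dobj, h] at hα
    simp at hα
  have hfin : ∀ i, ℓ i (α i) ≠ ⊤ := by
    intro i h
    apply hsum_ne_top
    rw [← Finset.add_sum_erase _ _ (Finset.mem_univ i), h]
    exact EReal.top_add_of_ne_bot (sum_ne_bot _ _ (fun j _ => hbot j _))
  have hLi' : ∀ i, ∃ L : ℝ, ℓ i (α i) = (L : EReal) :=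
    fun i => ⟨_, (EReal.coe_toReal (hfin i) (hbot i _)).symm⟩
  choose Li hLi using hLi'
  -- convexity of each ℓ i
  have hconvE : ∀ i, ConvexFnE (ℓ i) := by
    intro i a b t ht0 ht1
    refine le_trans ?_ (hℓsc i a b t ht0 ht1)
    have h2 : (0 : EReal) ≤ ((μ / 2 * t * (1 - t) * (a - b) ^ 2 : ℝ) : EReal) := by
      apply EReal.coe_nonneg.2
      exact mul_nonneg (mul_nonneg (mul_nonneg (by linarith) ht0) (by linarith)) (sq_nonneg _)
    calc ℓ i (t * a + (1 - t) * b) = ℓ i (t * a + (1 - t) * b) + 0 := (add_zero _).symm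
      _ ≤ _ := add_le_add_right h2 _
  -- conjugate subgradient data
  have hkey : ∀ i, ∃ C U : ℝ, conj (ℓ i) (-(dotp (col A i) w)) = (C : EReal) ∧
      ℓ i (u i) = (U : EReal) ∧ C + U ≤ (-(dotp (col A i) w)) * u i :=
    fun i => conj_subgrad (hconvE i) (hbot i) (hℓlsc i) (hLi i) (hu i)
  choose C U hC hU hCU using hkey
  -- strong convexity data
  have hGex : ∀ i, ∃ G : ℝ, ℓ i (α i + s * (u i - α i)) = (G : EReal) ∧
      G + μ / 2 * s * (1 - s) * (u i - α i) ^ 2 ≤ s * U i + (1 - s) * Li i := by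
    intro i
    have h1 := hℓsc i (u i) (α i) s hs0.le hs1
    rw [hU i, hLi i] at h1
    have e : s * u i + (1 - s) * α i = α i + s * (u i - α i) := by ring
    rw [e, ← EReal.coe_mul, ← EReal.coe_mul, ← EReal.coe_add] at h1
    have hnt : ℓ i (α i + s * (u i - α i)) ≠ ⊤ := by
      intro h
      rw [h, EReal.top_add_coe] at h1
      exact (EReal.coe_lt_top _).not_ge h1
    have hnb := hbot i (α i + s * (u i - α i))
    refine ⟨(ℓ i (α i + s * (u i - α i))).toReal, (EReal.coe_toReal hnt hnb).symm, ?_⟩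
    rw [← EReal.coe_toReal hnt hnb, ← EReal.coe_add] at h1
    exact EReal.coe_le_coe_iff.1 h1
  choose G hG hGle using hGex
  -- aggregate sums as reals
  have hsumC : ∑ i, conj (ℓ i) (-(dotp (col A i) w)) = ((∑ i, C i : ℝ) : EReal) := by
    rw [coe_sum]; exact Finset.sum_congr rfl fun i _ => hC i
  have hsumL : ∑ i, ℓ i (α i) = ((∑ i, Li i : ℝ) : EReal) := by
    rw [coe_sum]; exact Finset.sum_congr rfl fun i _ => hLi i
  have hPD : gap f f' A ℓ α =
      ((dotp w (A.mulVec α) + (∑ i, C i) + (∑ i, Li i) : ℝ) : EReal) := by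
    simp only [gap, Pobj, Dobj, fconj_eq hfconv]
    simp only [← hw, hsumC, hsumL]
    norm_cast
    ring
  have hD : Dobj f A ℓ α = ((f (A.mulVec α) + ∑ i, Li i : ℝ) : EReal) := by
    simp only [Dobj, hsumL]
    norm_cast
  -- the sum of the local subproblem objectives
  have hGk_each : ∀ k, Gk f f' A ℓ part τ σ' k (A.mulVec α) α (restr part k (s • (u - α))) =
      ((f (A.mulVec α) / K + s * dotp w (A.mulVec (restr part k (u - α)))
        + σ' / (2 * τ) * (s ^ 2 * sqnorm (A.mulVec (restr part k (u - α)))) : ℝ) : EReal)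
      + ∑ i ∈ block part k, ℓ i (α i + s * (u i - α i)) := by
    intro k
    simp only [Gk]
    congr 1
    · apply congrArg
      rw [restr_smul, mulVec_smul_real, dotp_smul, sqnorm_smul]
    · refine Finset.sum_congr rfl fun i hi => ?_
      have hik : part i = k := by simpa [block] using hi
      have : restr part k (s • (u - α)) i = s * (u i - α i) := by
        simp [restr, hik]
      rw [this]
  have hblocksum : ∑ k, ∑ i ∈ block part k, ℓ i (α i + s * (u i - α i))
      = ((∑ i, G i : ℝ) : EReal) := by
    have h0 : ∑ k, ∑ i ∈ block part k, ℓ i (α i + s * (u i - α i))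
        = ∑ i, ℓ i (α i + s * (u i - α i)) := by
      simp only [block]
      exact Finset.sum_fiberwise _ _ _
    rw [h0, coe_sum]
    exact Finset.sum_congr rfl fun i _ => hG i
  have hK0 : (K : ℝ) ≠ 0 := Nat.cast_ne_zero.2 hK.ne'
  have hr : ∑ k, (f (A.mulVec α) / K + s * dotp w (A.mulVec (restr part k (u - α)))
        + σ' / (2 * τ) * (s ^ 2 * sqnorm (A.mulVec (restr part k (u - α)))))
      = f (A.mulVec α) + s * dotp w (A.mulVec (u - α))
        + σ' * s ^ 2 / (2 * τ) * ∑ k, sqnorm (A.mulVec (restr part k (u - α))) := by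
    have t1 : ∑ _k : Fin K, f (A.mulVec α) / K = f (A.mulVec α) := by
      rw [Finset.sum_const, Finset.card_univ, Fintype.card_fin, nsmul_eq_mul, mul_comm,
        div_mul_cancel₀ _ hK0]
    have t2 : ∑ k : Fin K, s * dotp w (A.mulVec (restr part k (u - α)))
        = s * dotp w (A.mulVec (u - α)) := by
      rw [← Finset.mul_sum, sum_dotp_restr]
    have t3 : ∑ k : Fin K, σ' / (2 * τ) * (s ^ 2 * sqnorm (A.mulVec (restr part k (u - α))))
        = σ' * s ^ 2 / (2 * τ) * ∑ k, sqnorm (A.mulVec (restr part k (u - α))) := by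
      rw [← Finset.mul_sum, ← Finset.mul_sum]
      ring
    rw [Finset.sum_add_distrib, Finset.sum_add_distrib, t1, t2, t3]
  have hGsum : ∑ k, Gk f f' A ℓ part τ σ' k (A.mulVec α) α (restr part k (s • (u - α)))
      = ((f (A.mulVec α) + s * dotp w (A.mulVec (u - α))
        + σ' * s ^ 2 / (2 * τ) * ∑ k, sqnorm (A.mulVec (restr part k (u - α)))
        + ∑ i, G i : ℝ) : EReal) := by
    calc ∑ k, Gk f f' A ℓ part τ σ' k (A.mulVec α) α (restr part k (s • (u - α)))
        = ∑ k, (((f (A.mulVec α) / K + s * dotp w (A.mulVec (restr part k (u - α)))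
            + σ' / (2 * τ) * (s ^ 2 * sqnorm (A.mulVec (restr part k (u - α)))) : ℝ) : EReal)
          + ∑ i ∈ block part k, ℓ i (α i + s * (u i - α i))) :=
          Finset.sum_congr rfl fun k _ => hGk_each k
      _ = (∑ k, ((f (A.mulVec α) / K + s * dotp w (A.mulVec (restr part k (u - α)))
            + σ' / (2 * τ) * (s ^ 2 * sqnorm (A.mulVec (restr part k (u - α)))) : ℝ) : EReal))
          + ∑ k, ∑ i ∈ block part k, ℓ i (α i + s * (u i - α i)) := Finset.sum_add_distrib
      _ = _ := by
          rw [← coe_sum, hblocksum, hr, ← EReal.coe_add]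
  rw [hPD, hD, hGsum]
  rw [← EReal.coe_mul, ← EReal.coe_add, ← EReal.coe_sub, ← EReal.coe_sub]
  apply EReal.coe_le_coe_iff.2
  -- now a purely real inequality
  have e1 : dotp w (A.mulVec α) = ∑ i, α i * dotp (col A i) w := dotp_mulVec w A α
  have e2 : dotp w (A.mulVec (u - α)) = ∑ i, (u i - α i) * dotp (col A i) w := by
    rw [dotp_mulVec]
    exact Finset.sum_congr rfl fun i _ => by rw [Pi.sub_apply]
  have e3 : sqnorm (u - α) = ∑ i, (u i - α i) ^ 2 := by
    simp [sqnorm]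
  rw [e1, e2, e3]
  have hperi : ∀ i ∈ (Finset.univ : Finset (Fin n)),
      s * (α i * dotp (col A i) w) + s * C i + s * Li i
        + μ / 2 * (1 - s) * s * (u i - α i) ^ 2
      ≤ Li i - s * ((u i - α i) * dotp (col A i) w) - G i := by
    intro i _
    have h1 := hGle i
    have h2 := mul_le_mul_of_nonneg_left (hCU i) hs0.le
    nlinarith [h1, h2]
  have hsum := Finset.sum_le_sum hperi
  simp only [Finset.sum_add_distrib, Finset.sum_sub_distrib, ← Finset.mul_sum] at hsum
  linarith [hsum]


end ProxCoCoA
end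
end

section
/- Let c ∈ (0,1], Q ≥ 0, and t₀ ∈ ℕ. Suppose (a_t)_{t ≥ t₀} is a sequence of nonnegative reals with a_{t₀} ≤ Q such that for every t ≥ t₀ and every s ∈ [0,1], a_{t+1} ≤ (1 − c s) a_t + (c s²/2) Q. Then for every t ≥ t₀, a_t ≤ Q / (1 + (c/2)(t − t₀)). -/
/-- the analytic recursion underlying the sublinear rate.
If `a_{t₀} ≤ Q` and `a_{t+1} ≤ (1 − c s) a_t + (c s²/2) Q` for every `s ∈ [0,1]`,
then `a_t ≤ Q / (1 + (c/2)(t − t₀))` for all `t ≥ t₀`. -/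
theorem sublinear_recursion (c Q : ℝ) (hc0 : 0 < c) (hc1 : c ≤ 1) (hQ : 0 ≤ Q)
    (t₀ : ℕ) (a : ℕ → ℝ)
    (ha_nonneg : ∀ t, t₀ ≤ t → 0 ≤ a t)
    (ha_init : a t₀ ≤ Q)
    (ha_rec : ∀ t, t₀ ≤ t → ∀ s : ℝ, 0 ≤ s → s ≤ 1 →
      a (t + 1) ≤ (1 - c * s) * a t + c * s ^ 2 / 2 * Q) :
    ∀ t, t₀ ≤ t → a t ≤ Q / (1 + c / 2 * ((t : ℝ) - (t₀ : ℝ))) := by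
  intro t ht
  induction t, ht using Nat.le_induction with
  | base => simpa using ha_init
  | succ t ht ih =>
    set D : ℝ := 1 + c / 2 * ((t : ℝ) - (t₀ : ℝ)) with hD
    clear_value D
    have hnat : (t₀ : ℝ) ≤ (t : ℝ) := by exact_mod_cast ht
    have hD1 : (1 : ℝ) ≤ D := by
      have : 0 ≤ c / 2 * ((t : ℝ) - (t₀ : ℝ)) :=
        mul_nonneg (by positivity) (by linarith)
      linarith
    have hD0 : (0 : ℝ) < D := by linarith
    have hs1 : 1 / D ≤ 1 := by
      rw [div_le_one hD0]; exact hD1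
    have hrec := ha_rec t ht (1 / D) (by positivity) hs1
    have hcD : c * (1 / D) ≤ 1 := by
      calc c * (1 / D) ≤ 1 * 1 := by
            apply mul_le_mul hc1 hs1 (by positivity) (by norm_num)
        _ = 1 := by ring
    have hstep : a (t + 1) ≤ (1 - c * (1 / D)) * (Q / D) + c * (1 / D) ^ 2 / 2 * Q := by
      refine hrec.trans ?_
      have := mul_le_mul_of_nonneg_left ih (by linarith : 0 ≤ 1 - c * (1 / D))
      linarith
    have hcast : ((t + 1 : ℕ) : ℝ) = (t : ℝ) + 1 := by push_cast; ring
    rw [hcast]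
    have hD' : 1 + c / 2 * ((t : ℝ) + 1 - (t₀ : ℝ)) = D + c / 2 := by
      rw [hD]; ring
    rw [hD']
    refine hstep.trans ?_
    have hD2 : (0 : ℝ) < D + c / 2 := by linarith
    have key : (1 - c * (1 / D)) * (Q / D) + c * (1 / D) ^ 2 / 2 * Q
        = Q * (2 * D - c) / (2 * D ^ 2) := by
      field_simp; ring
    rw [key, div_le_div_iff₀ (by positivity) hD2]
    nlinarith [sq_nonneg c, mul_nonneg hQ (sq_nonneg c)]
end

section
/- Let μ > 0, σ' > 0, τ > 0, set σ_max := max_k σ_k and s := τμ/(τμ + σ_max σ') ∈ (0,1]. Then for all u, α ∈ ℝ^n, −(τμ(1 − s)/(σ' s))‖u − α‖² + Σ_{k=1}^K ‖A(u − α)_[k]‖² ≤ 0. -/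
open scoped BigOperators

noncomputable section

namespace ProxCoCoA

lemma sqnorm_nonneg {m : ℕ} (u : Fin m → ℝ) : 0 ≤ sqnorm u :=
  Finset.sum_nonneg fun _ _ => sq_nonneg _

lemma sqnorm_eq_zero {m : ℕ} {u : Fin m → ℝ} (h : sqnorm u = 0) : u = 0 := by
  funext i
  have := (Finset.sum_eq_zero_iff_of_nonneg (fun j _ => sq_nonneg (u j))).1 h i (Finset.mem_univ i)
  simpa using pow_eq_zero_iff (n := 2) (by norm_num) |>.1 this

lemma sqnorm_mulVec_le {d n : ℕ} (A : Matrix (Fin d) (Fin n) ℝ) (β : Fin n → ℝ) :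
    sqnorm (A.mulVec β) ≤ (∑ j, ∑ i, (A j i) ^ 2) * sqnorm β := by
  unfold sqnorm Matrix.mulVec dotProduct
  rw [Finset.sum_mul]
  refine Finset.sum_le_sum fun j _ => ?_
  exact Finset.sum_mul_sq_le_sq_mul_sq Finset.univ (fun i => A j i) β

lemma sqnorm_le_sigmaBlock {d n K : ℕ} (A : Matrix (Fin d) (Fin n) ℝ)
    (part : Fin n → Fin K) (k : Fin K) (β : Fin n → ℝ) (hs : supportedOn part k β) :
    sqnorm (A.mulVec β) ≤ sigmaBlock A part k * sqnorm β := by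
  by_cases hβ : β = 0
  · subst hβ
    have : A.mulVec 0 = 0 := Matrix.mulVec_zero A
    simp [this, sqnorm]
  · have hpos : 0 < sqnorm β := by
      rcases lt_or_eq_of_le (sqnorm_nonneg β) with h | h
      · exact h
      · exact absurd (sqnorm_eq_zero h.symm) hβ
    have hmem : sqnorm (A.mulVec β) / sqnorm β ∈
        {r : ℝ | ∃ γ : Fin n → ℝ, γ ≠ 0 ∧ supportedOn part k γ ∧
          r = sqnorm (A.mulVec γ) / sqnorm γ} := ⟨β, hβ, hs, rfl⟩
    have hbdd : BddAbove {r : ℝ | ∃ γ : Fin n → ℝ, γ ≠ 0 ∧ supportedOn part k γ ∧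
        r = sqnorm (A.mulVec γ) / sqnorm γ} := by
      refine ⟨∑ j, ∑ i, (A j i) ^ 2, ?_⟩
      rintro r ⟨γ, hγ, -, rfl⟩
      have hγpos : 0 < sqnorm γ := by
        rcases lt_or_eq_of_le (sqnorm_nonneg γ) with h | h
        · exact h
        · exact absurd (sqnorm_eq_zero h.symm) hγ
      rw [div_le_iff₀ hγpos]
      exact sqnorm_mulVec_le A γ
    have := le_csSup hbdd hmem
    have h2 : sqnorm (A.mulVec β) / sqnorm β ≤ sigmaBlock A part k := this
    calc sqnorm (A.mulVec β) = sqnorm (A.mulVec β) / sqnorm β * sqnorm β := by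
          field_simp
      _ ≤ sigmaBlock A part k * sqnorm β :=
          mul_le_mul_of_nonneg_right h2 (sqnorm_nonneg β)

lemma sum_sqnorm_restr {n K : ℕ} (part : Fin n → Fin K) (β : Fin n → ℝ) :
    ∑ k, sqnorm (restr part k β) = sqnorm β := by
  unfold sqnorm restr
  rw [Finset.sum_comm]
  refine Finset.sum_congr rfl fun i _ => ?_
  simp [apply_ite (fun x : ℝ => x ^ 2), Finset.sum_ite_eq]

/-- for the step size `s = τμ/(τμ + σ_max σ')`, the error term `R`
of the framework is nonpositive. -/
theorem error_term_nonpos {d n K : ℕ}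
    (A : Matrix (Fin d) (Fin n) ℝ) (part : Fin n → Fin K)
    (μ τ σ' : ℝ) (hμ : 0 < μ) (hτ : 0 < τ) (hσ' : 0 < σ')
    (σmax : ℝ) (hσmax : IsGreatest (Set.range (sigmaBlock A part)) σmax)
    (u α : Fin n → ℝ) :
    -(τ * μ * (1 - τ * μ / (τ * μ + σmax * σ'))
        / (σ' * (τ * μ / (τ * μ + σmax * σ')))) * sqnorm (u - α)
      + ∑ k, sqnorm (A.mulVec (restr part k (u - α))) ≤ 0 := by
  obtain ⟨⟨k0, hk0⟩, hub⟩ := hσmax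
  have hσmax0 : 0 ≤ σmax := by
    rw [← hk0]
    apply Real.sSup_nonneg
    rintro r ⟨γ, hγ, -, rfl⟩
    exact div_nonneg (sqnorm_nonneg _) (sqnorm_nonneg _)
  have hden : 0 < τ * μ + σmax * σ' := by positivity
  have hs : 0 < τ * μ / (τ * μ + σmax * σ') := by positivity
  have hcoef : τ * μ * (1 - τ * μ / (τ * μ + σmax * σ'))
      / (σ' * (τ * μ / (τ * μ + σmax * σ'))) = σmax := by
    field_simp
    ring
  rw [hcoef]
  have hsum : ∑ k, sqnorm (A.mulVec (restr part k (u - α)))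
      ≤ σmax * sqnorm (u - α) := by
    rw [← sum_sqnorm_restr part (u - α), Finset.mul_sum]
    refine Finset.sum_le_sum fun k _ => ?_
    calc sqnorm (A.mulVec (restr part k (u - α)))
        ≤ sigmaBlock A part k * sqnorm (restr part k (u - α)) :=
          sqnorm_le_sigmaBlock A part k _ (fun i hi => by simp [restr, hi])
      _ ≤ σmax * sqnorm (restr part k (u - α)) :=
          mul_le_mul_of_nonneg_right (hub ⟨k, rfl⟩) (sqnorm_nonneg _)
  linarith

end ProxCoCoA
end
end
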